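/- arXiv:1810.07627 — 3 statements merged into one kernel-verified Lean document; each statement's English description precedes it below -/
import Mathlib

section
/- Let G be a finite group, m a positive integer, and let D be the set of maximal cyclic subgroups of G whose orders are divisible by m. Define C₁ ≈ₘ C₂ iff m divides |C₁ ∩ C₂|. Then ≈ₘ is an equivalence relation on D. -/
open SimpleGraph

/-- The enhanced power graph of a group. -/
def enhancedPowerGraph (G : Type*) [Group G] : SimpleGraph G where
  Adj x y := x ≠ y ∧ ∃ z : G, x ∈ Subgroup.zpowers z ∧ y ∈ Subgroup.zpowers z
  symm := by constructor; rintro x y ⟨h, z, hx, hy⟩; exact ⟨h.symm, z, hy, hx⟩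
  loopless := by constructor; rintro x ⟨h, -⟩; exact h rfl

/-- The (undirected) power graph of a group. -/
def powerGraph (G : Type*) [Group G] : SimpleGraph G where
  Adj x y := x ≠ y ∧ (x ∈ Subgroup.zpowers y ∨ y ∈ Subgroup.zpowers x)
  symm := by constructor; rintro x y ⟨h, hz⟩; exact ⟨h.symm, hz.symm⟩
  loopless := by constructor; rintro x ⟨h, -⟩; exact h rfl

/-- The strong product of two simple graphs. -/
def strongProd {α β : Type*} (Γ : SimpleGraph α) (Δ : SimpleGraph β) :
    SimpleGraph (α × β) where
  Adj p q := (p.1 = q.1 ∧ Δ.Adj p.2 q.2) ∨ (Γ.Adj p.1 q.1 ∧ p.2 = q.2) ∨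
    (Γ.Adj p.1 q.1 ∧ Δ.Adj p.2 q.2)
  symm := by
    constructor
    rintro ⟨a, b⟩ ⟨c, d⟩ (⟨h1, h2⟩ | ⟨h1, h2⟩ | ⟨h1, h2⟩)
    · exact Or.inl ⟨h1.symm, h2.symm⟩
    · exact Or.inr (Or.inl ⟨h1.symm, h2.symm⟩)
    · exact Or.inr (Or.inr ⟨h1.symm, h2.symm⟩)
  loopless := by
    constructor
    rintro ⟨a, b⟩ (⟨-, h⟩ | ⟨h, -⟩ | ⟨h, -⟩) <;> exact h.ne rfl

/-- The automorphism group of a simple graph, as a subgroup of permutations. -/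
def graphAut {V : Type*} (Γ : SimpleGraph V) : Subgroup (Equiv.Perm V) where
  carrier := {σ | ∀ x y, Γ.Adj (σ x) (σ y) ↔ Γ.Adj x y}
  one_mem' := fun _ _ => Iff.rfl
  mul_mem' := by
    intro σ τ hσ hτ x y
    simpa [Equiv.Perm.mul_apply] using (hσ (τ x) (τ y)).trans (hτ x y)
  inv_mem' := by
    intro σ hσ x y
    simpa using (hσ (σ⁻¹ x) (σ⁻¹ y)).symm

/-- A subgroup is maximal cyclic if it is maximal among cyclic subgroups. -/
def IsMaxCyclic {G : Type*} [Group G] (C : Subgroup G) : Prop :=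
  Maximal (fun K : Subgroup G => ∃ g : G, K = Subgroup.zpowers g) C

/-- The closed neighborhood of a vertex. -/
def closedNbhd {V : Type*} (Γ : SimpleGraph V) (x : V) : Set V :=
  Γ.neighborSet x ∪ {x}


/-!
A finite cyclic group has at most `m` solutions of `x ^ m = 1`, so it contains at most one
subgroup of order `m`, namely `⟨a⟩` for any element `a` of order `m`. If `m` divides `|C₁ ∩ C₂|` and `|C₂ ∩ C₃|`, both of these subgroups of the cyclic
group `C₂` contain an element of order `m`, hence the same subgroup of order `m`; so `m` divides
`|C₁ ∩ C₂ ∩ C₃|`, which divides `|C₁ ∩ C₃|`.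
-/

open Subgroup

namespace IsCyclic

variable {H : Type*} [Group H] [Finite H] [IsCyclic H]

theorem exists_orderOf_eq_of_dvd_natCard {m : ℕ} (hm : m ∣ Nat.card H) :
    ∃ a : H, orderOf a = m := by
  obtain ⟨g, hg⟩ := exists_ofOrder_eq_natCard (α := H)
  rw [← hg] at hm
  exact ⟨g ^ (orderOf g / m), orderOf_pow_orderOf_div (orderOf_pos g).ne' hm⟩

theorem mem_zpowers_of_pow_orderOf_eq_one {a b : H} (hb : b ^ orderOf a = 1) :
    b ∈ zpowers a := by
  classical
  have := Fintype.ofFinite H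
  have hsub : (zpowers a : Set H) ⊆ {x | x ^ orderOf a = 1} := fun _ hx =>
    orderOf_dvd_iff_pow_eq_one.mp (orderOf_dvd_of_mem_zpowers hx)
  have hcard : {x : H | x ^ orderOf a = 1}.ncard ≤ (zpowers a : Set H).ncard := by
    rw [Set.ncard_eq_toFinset_card', Set.toFinset_ofPred, ← Nat.card_coe_set_eq,
      SetLike.coe_sort_coe, Nat.card_zpowers]
    exact IsCyclic.card_pow_eq_one_le (orderOf_pos a)
  rw [← SetLike.mem_coe, Set.eq_of_subset_of_ncard_le hsub hcard]
  exact hb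

theorem dvd_natCard_inf {m : ℕ} {A B : Subgroup H} (hA : m ∣ Nat.card A)
    (hB : m ∣ Nat.card B) : m ∣ Nat.card ↥(A ⊓ B) := by
  obtain ⟨⟨a, haA⟩, ha⟩ := exists_orderOf_eq_of_dvd_natCard hA
  obtain ⟨⟨b, hbB⟩, hb⟩ := exists_orderOf_eq_of_dvd_natCard hB
  rw [orderOf_mk] at ha hb
  have hba : b ∈ zpowers a :=
    mem_zpowers_of_pow_orderOf_eq_one (by rw [ha, ← hb, pow_orderOf_eq_one])
  exact hb ▸ orderOf_dvd_natCard _ ⟨zpowers_le.mpr haA hba, hbB⟩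

end IsCyclic

namespace Subgroup

variable {G : Type*} [Group G] {A B C : Subgroup G}

theorem natCard_subgroupOf (h : A ≤ C) : Nat.card (A.subgroupOf C) = Nat.card A :=
  Nat.card_congr (subgroupOfEquivOfLe h).toEquiv

theorem dvd_natCard_inf_of_le_of_isCyclic [Finite C] [IsCyclic C] (hAC : A ≤ C) (hBC : B ≤ C)
    {m : ℕ} (hA : m ∣ Nat.card A) (hB : m ∣ Nat.card B) : m ∣ Nat.card ↥(A ⊓ B) := by
  rw [← natCard_subgroupOf hAC] at hA
  rw [← natCard_subgroupOf hBC] at hB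
  rw [← natCard_subgroupOf (inf_le_left.trans hAC), subgroupOf, comap_inf]
  exact IsCyclic.dvd_natCard_inf hA hB

end Subgroup

theorem stmt_6_general {G : Type*} [Group G] [Fintype G] (m : ℕ) :
    Equivalence (fun C₁ C₂ : {C : Subgroup G // IsMaxCyclic C ∧ m ∣ Nat.card ↥C} =>
      m ∣ Nat.card ↥(C₁.1 ⊓ C₂.1)) := by
  refine ⟨fun C => by rw [inf_idem]; exact C.2.2, fun h => by rwa [inf_comm], ?_⟩
  intro C₁ C₂ C₃ h₁₂ h₂₃
  obtain ⟨g, hg⟩ := C₂.2.1.1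
  have : IsCyclic C₂.1 := hg ▸ inferInstance
  exact (dvd_natCard_inf_of_le_of_isCyclic inf_le_right inf_le_left h₁₂ h₂₃).trans
    (card_dvd_of_le (inf_le_inf inf_le_left inf_le_right))

theorem stmt_6 {G : Type*} [Group G] [Fintype G] (m : ℕ) (hm : 0 < m) :
    Equivalence (fun C₁ C₂ : {C : Subgroup G // IsMaxCyclic C ∧ m ∣ Nat.card ↥C} =>
      m ∣ Nat.card ↥(C₁.1 ⊓ C₂.1)) :=
  stmt_6_general m
end

section
/- Let G be a finite group, m a positive integer, D the set of maximal cyclic subgroups of G with order divisible by m, and ≈ₘ the equivalence relation on D given by C₁ ≈ₘ C₂ iff m divides |C₁ ∩ C₂|. Then the number of elements of G of order m equals φ(m) times the number of ≈ₘ-equivalence classes, where φ is Euler's totient function. -/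
open SimpleGraph

/-!
If `x` has order `m` and lies in the cyclic group `C`, then `⟨x⟩` is the only subgroup of `C`
of order `m`, so `m ∣ |C ∩ C'|` exactly when `x ∈ C'`. Hence the `≈ₘ`-class of a maximal cyclic
subgroup `C` is the set of maximal cyclic subgroups containing any element `x ∈ C` of order `m`,
and two elements of order `m` give the same class iff they generate the same subgroup. Each
cyclic subgroup of order `m` has `φ(m)` generators.
-/

open Finset Subgroup

theorem Nat.card_eq_mul_card_range {α β : Type*} [Finite α] (f : α → β) {k : ℕ}
    (hf : ∀ a, Nat.card {a' // f a' = f a} = k) : Nat.card α = k * Nat.card (Set.range f) := by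
  have := Fintype.ofFinite (Set.range f)
  rw [← Nat.card_congr (Equiv.sigmaFiberEquiv (Set.rangeFactorization f)), Nat.card_sigma]
  have hfiber : ∀ b : Set.range f, Nat.card {a // Set.rangeFactorization f a = b} = k := by
    rintro ⟨_, a, rfl⟩
    rw [← hf a]
    exact Nat.card_congr (Equiv.subtypeEquivRight fun a' => Subtype.ext_iff)
  simp only [hfiber, Finset.sum_const, Finset.card_univ, Nat.card_eq_fintype_card, smul_eq_mul,
    mul_comm]

theorem IsCyclic.mem_zpowers_of_pow_orderOf_eq_one_s7 {K : Type*} [Group K] [Finite K] [IsCyclic K]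
    {x y : K} (h : x ^ orderOf y = 1) : x ∈ zpowers y := by
  classical
  have := Fintype.ofFinite K
  -- `⟨y⟩` already has `orderOf y` solutions of `a ^ orderOf y = 1`, the most a cyclic group has
  have hsub : (zpowers y : Set K).toFinset ⊆ ({a | a ^ orderOf y = 1} : Finset K) := by
    intro a ha
    rw [Set.mem_toFinset] at ha
    simpa using orderOf_dvd_iff_pow_eq_one.mp (orderOf_dvd_of_mem_zpowers ha)
  have hcard : #({a | a ^ orderOf y = 1} : Finset K) ≤ #(zpowers y : Set K).toFinset := by
    rw [Set.toFinset_card, ← Nat.card_eq_fintype_card]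
    exact (IsCyclic.card_pow_eq_one_le (orderOf_pos y)).trans_eq (Nat.card_zpowers y).symm
  have hx : x ∈ ({a | a ^ orderOf y = 1} : Finset K) := by simpa using h
  rw [← Finset.eq_of_subset_of_card_le hsub hcard, Set.mem_toFinset] at hx
  exact hx

section

variable {G : Type*} [Group G]

theorem mem_zpowers_of_pow_orderOf_eq_one_s7 [Finite G] {g x y : G} (hx : x ∈ zpowers g)
    (hy : y ∈ zpowers g) (h : x ^ orderOf y = 1) : x ∈ zpowers y := by
  have hK : (⟨x, hx⟩ : zpowers g) ∈ zpowers (⟨y, hy⟩ : zpowers g) :=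
    IsCyclic.mem_zpowers_of_pow_orderOf_eq_one_s7 (by rw [Subgroup.orderOf_mk]; exact Subtype.ext h)
  obtain ⟨k, hk⟩ := mem_zpowers_iff.mp hK
  exact mem_zpowers_iff.mpr ⟨k, congrArg Subtype.val hk⟩

theorem zpowers_eq_zpowers_of_orderOf_eq [Finite G] {g x y : G} (hx : x ∈ zpowers g)
    (hy : y ∈ zpowers g) (h : orderOf x = orderOf y) : zpowers x = zpowers y :=
  le_antisymm
    (zpowers_le.mpr (mem_zpowers_of_pow_orderOf_eq_one_s7 hx hy (h ▸ pow_orderOf_eq_one x)))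
    (zpowers_le.mpr (mem_zpowers_of_pow_orderOf_eq_one_s7 hy hx (h ▸ pow_orderOf_eq_one y)))

theorem zpowers_eq_zpowers_iff_of_finite [Finite G] {x y : G} :
    zpowers y = zpowers x ↔ y ∈ zpowers x ∧ orderOf y = orderOf x := by
  constructor
  · intro h
    refine ⟨h ▸ mem_zpowers y, ?_⟩
    rw [← Nat.card_zpowers, h, Nat.card_zpowers]
  · rintro ⟨hy, hord⟩
    exact zpowers_eq_zpowers_of_orderOf_eq hy (mem_zpowers x) hord

theorem card_setOf_zpowers_eq [Finite G] (x : G) :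
    Nat.card {y : G | zpowers y = zpowers x} = (orderOf x).totient := by
  classical
  have := Fintype.ofFinite (zpowers x)
  have hgen : Nat.card {y : G | zpowers y = zpowers x} =
      Nat.card {a : zpowers x // orderOf a = orderOf x} :=
    Nat.card_congr
      { toFun := fun y => ⟨⟨y, (zpowers_eq_zpowers_iff_of_finite.mp y.2).1⟩, by
          rw [Subgroup.orderOf_mk]; exact (zpowers_eq_zpowers_iff_of_finite.mp y.2).2⟩
        invFun := fun a => ⟨a, zpowers_eq_zpowers_iff_of_finite.mpr
          ⟨a.1.2, by rw [Subgroup.orderOf_coe]; exact a.2⟩⟩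
        left_inv := fun _ => rfl
        right_inv := fun _ => rfl }
  rw [hgen, Nat.card_eq_fintype_card, Fintype.card_subtype]
  exact IsCyclic.card_orderOf_eq_totient (by rw [← Nat.card_eq_fintype_card, Nat.card_zpowers])

theorem exists_mem_orderOf_eq_of_dvd_card [Finite G] {g : G} {H : Subgroup G}
    (hH : H ≤ zpowers g) {m : ℕ} (hm : m ∣ Nat.card H) : ∃ y ∈ H, orderOf y = m := by
  obtain ⟨n, rfl⟩ := (le_zpowers_iff g H).mp hH
  rw [Nat.card_zpowers] at hm
  exact ⟨_, pow_mem (mem_zpowers _) _, orderOf_pow_orderOf_div (orderOf_pos _).ne' hm⟩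

theorem dvd_card_inf_iff_mem [Finite G] {g x : G} (hx : x ∈ zpowers g) (C' : Subgroup G) :
    orderOf x ∣ Nat.card ↥(zpowers g ⊓ C') ↔ x ∈ C' := by
  constructor
  · intro hdvd
    obtain ⟨y, ⟨hyg, hyC'⟩, hy⟩ := exists_mem_orderOf_eq_of_dvd_card inf_le_left hdvd
    rw [← zpowers_le, zpowers_eq_zpowers_of_orderOf_eq hx hyg hy.symm, zpowers_le]
    exact hyC'
  · intro hxC'
    exact Subgroup.orderOf_dvd_natCard _ ⟨hx, hxC'⟩

theorem exists_isMaxCyclic_mem [Finite G] (x : G) : ∃ C : Subgroup G, IsMaxCyclic C ∧ x ∈ C := by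
  obtain ⟨C, hle, hC⟩ := Finite.exists_le_maximal
    (p := fun K : Subgroup G => ∃ g : G, K = zpowers g) ⟨x, rfl⟩
  exact ⟨C, hC, hle (mem_zpowers x)⟩

def maxCyclicContaining (x : G) : Set (Subgroup G) :=
  {C | IsMaxCyclic C ∧ x ∈ C}

theorem setOf_dvd_card_inf_eq_maxCyclicContaining [Finite G] {C : Subgroup G} (hC : IsMaxCyclic C)
    {x : G} (hxC : x ∈ C) {m : ℕ} (hx : orderOf x = m) :
    {C' : Subgroup G | IsMaxCyclic C' ∧ m ∣ Nat.card ↥C' ∧ m ∣ Nat.card ↥(C ⊓ C')} =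
      maxCyclicContaining x := by
  obtain ⟨g, rfl⟩ := hC.prop
  ext C'
  subst hx
  constructor
  · rintro ⟨hC', -, hdvd⟩
    exact ⟨hC', (dvd_card_inf_iff_mem hxC C').mp hdvd⟩
  · rintro ⟨hC', hxC'⟩
    exact ⟨hC', Subgroup.orderOf_dvd_natCard _ hxC', (dvd_card_inf_iff_mem hxC C').mpr hxC'⟩

theorem maxCyclicContaining_eq_iff [Finite G] {x y : G} (h : orderOf y = orderOf x) :
    maxCyclicContaining y = maxCyclicContaining x ↔ zpowers y = zpowers x := by
  constructor
  · intro hxy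
    obtain ⟨C, hC, hxC⟩ := exists_isMaxCyclic_mem x
    have hyC : y ∈ C := (hxy ▸ ⟨hC, hxC⟩ : C ∈ maxCyclicContaining y).2
    obtain ⟨g, rfl⟩ := hC.prop
    exact zpowers_eq_zpowers_of_orderOf_eq hyC hxC h
  · intro hxy
    ext C
    simp only [maxCyclicContaining, Set.mem_ofPred_eq, ← zpowers_le, hxy]

theorem range_maxCyclicContaining [Finite G] (m : ℕ) :
    Set.range (fun x : {x : G | orderOf x = m} => maxCyclicContaining (x : G)) =
      {s : Set (Subgroup G) | ∃ C : Subgroup G, IsMaxCyclic C ∧ m ∣ Nat.card ↥C ∧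
        s = {C' : Subgroup G | IsMaxCyclic C' ∧ m ∣ Nat.card ↥C' ∧ m ∣ Nat.card ↥(C ⊓ C')}} := by
  ext s
  constructor
  · rintro ⟨⟨x, hx⟩, rfl⟩
    obtain ⟨C, hC, hxC⟩ := exists_isMaxCyclic_mem x
    exact ⟨C, hC, hx ▸ Subgroup.orderOf_dvd_natCard _ hxC,
      (setOf_dvd_card_inf_eq_maxCyclicContaining hC hxC hx).symm⟩
  · rintro ⟨C, hC, hdvd, rfl⟩
    obtain ⟨g, hg⟩ := hC.prop
    obtain ⟨x, hxC, hx⟩ := exists_mem_orderOf_eq_of_dvd_card hg.le hdvd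
    exact ⟨⟨x, hx⟩, (setOf_dvd_card_inf_eq_maxCyclicContaining hC hxC hx).symm⟩

theorem card_fiber_maxCyclicContaining [Finite G] {m : ℕ} (x : {x : G | orderOf x = m}) :
    Nat.card {y : {x : G | orderOf x = m} //
      maxCyclicContaining (y : G) = maxCyclicContaining (x : G)} = m.totient := by
  obtain ⟨x, rfl⟩ := x
  have hiff : ∀ y : G, (orderOf y = orderOf x ∧ maxCyclicContaining y = maxCyclicContaining x) ↔
      zpowers y = zpowers x := by
    intro y
    constructor
    · rintro ⟨hy, hxy⟩
      exact (maxCyclicContaining_eq_iff hy).mp hxy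
    · intro hxy
      have hord := (zpowers_eq_zpowers_iff_of_finite.mp hxy).2
      exact ⟨hord, (maxCyclicContaining_eq_iff hord).mpr hxy⟩
  rw [← card_setOf_zpowers_eq x]
  exact Nat.card_congr ((Equiv.subtypeSubtypeEquivSubtypeInter (fun y => orderOf y = orderOf x)
    (fun y => maxCyclicContaining y = maxCyclicContaining x)).trans
    (Equiv.subtypeEquivRight hiff))

end

theorem stmt_7_general {G : Type*} [Group G] [Fintype G] (m : ℕ) :
    Nat.card {x : G | orderOf x = m} =
      Nat.totient m *
        Nat.card {s : Set (Subgroup G) |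
          ∃ C : Subgroup G, IsMaxCyclic C ∧ m ∣ Nat.card ↥C ∧
            s = {C' : Subgroup G | IsMaxCyclic C' ∧ m ∣ Nat.card ↥C' ∧
              m ∣ Nat.card ↥(C ⊓ C')}} := by
  rw [← range_maxCyclicContaining]
  exact Nat.card_eq_mul_card_range _ card_fiber_maxCyclicContaining

theorem stmt_7 {G : Type*} [Group G] [Fintype G] (m : ℕ) (hm : 0 < m) :
    Nat.card {x : G | orderOf x = m} =
      Nat.totient m *
        Nat.card {s : Set (Subgroup G) |
          ∃ C : Subgroup G, IsMaxCyclic C ∧ m ∣ Nat.card ↥C ∧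
            s = {C' : Subgroup G | IsMaxCyclic C' ∧ m ∣ Nat.card ↥C' ∧
              m ∣ Nat.card ↥(C ⊓ C')}} :=
  stmt_7_general m
end

section
/- C₂, C₃, and the Klein four-group C₂ × C₂ are the only non-trivial finite groups G for which the order of the automorphism group of the enhanced power graph of G is squarefree. -/
open SimpleGraph

/-!
If two vertices have the same neighbours outside the pair, their transposition is a graph
automorphism; two such transpositions with disjoint supports generate a Klein four-subgroup, so
then `4 ∣ |Aut|`. In the enhanced power graph `g` and `g⁻¹` are such twins, and so are any two
involutions `s`, `t` lying in no cyclic subgroup but their own: their only neighbour is `1`.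

If `|Aut|` is squarefree, the elements with `g ^ 2 ≠ 1` therefore form at most one pair
`{g, g⁻¹}`. If moreover some `t ∉ ⟨g⟩` exists, then `t` and `g t g⁻¹` are two distinct
involutions of the second kind, which is impossible; so a non-cyclic `G` has exponent two, and
then at most four elements, i.e. it is a Klein four-group. A cyclic `G` has a complete enhanced
power graph, so `|Aut| = |G|!`, which is squarefree exactly when `|G| ≤ 3`. Conversely, the
enhanced power graph of the Klein four-group is a star, whose automorphisms fix the centre, so
`|Aut| ∣ 3!`.
-/

open Equiv Subgroup
open scoped Nat

lemma eq_one_or_eq_of_mem_zpowers {G : Type*} [Group G] {z x : G} (hz : z ^ 2 = 1)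
    (hx : x ∈ zpowers z) : x = 1 ∨ x = z := by
  obtain ⟨k, rfl⟩ := hx
  obtain ⟨m, rfl | rfl⟩ := Int.even_or_odd' k
  · simp [zpow_mul, hz]
  · simp [zpow_add, zpow_mul, hz]

lemma eq_of_mem_zpowers_of_sq_eq_one {G : Type*} [Group G] {z s : G} (hz : z ^ 2 = 1)
    (hs : s ≠ 1) (h : s ∈ zpowers z) : z = s :=
  ((eq_one_or_eq_of_mem_zpowers hz h).resolve_left hs).symm

lemma four_dvd_card_of_commute {K : Type*} [Group K] [Finite K] {σ τ : K}
    (hσ : orderOf σ = 2) (hτ : orderOf τ = 2) (hne : σ ≠ τ) (hcomm : Commute σ τ) :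
    4 ∣ Nat.card K := by
  have hdisj : Disjoint (zpowers σ) (zpowers τ) := by
    refine disjoint_def.mpr fun {x} hxσ hxτ => ?_
    rcases eq_one_or_eq_of_mem_zpowers (hσ ▸ pow_orderOf_eq_one σ) hxσ with h | rfl
    · exact h
    · exact (eq_one_or_eq_of_mem_zpowers (hτ ▸ pow_orderOf_eq_one τ) hxτ).resolve_right hne
  let f := (zpowers σ).subtype.noncommCoprod (zpowers τ).subtype
    (by rintro ⟨_, i, rfl⟩ ⟨_, j, rfl⟩; exact hcomm.zpow_zpow i j)
  have hf : Function.Injective f := (MonoidHom.noncommCoprod_injective _ _ _).mpr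
    ⟨subtype_injective _, subtype_injective _, by rwa [range_subtype, range_subtype]⟩
  simpa [Nat.card_prod, Nat.card_zpowers, hσ, hτ] using card_dvd_of_injective f hf

lemma Nat.squarefree_factorial_iff {n : ℕ} : Squarefree n ! ↔ n ≤ 3 := by
  refine ⟨fun h => ?_, fun h => by interval_cases n <;> decide +kernel⟩
  by_contra! hn
  exact absurd (h.squarefree_of_dvd (Nat.dvd_factorial four_pos hn)) (by decide +kernel)

section graphAut

variable {V : Type*} {Γ : SimpleGraph V}

lemma swap_mem_graphAut [DecidableEq V] {a b : V}
    (h : ∀ x, x ≠ a → x ≠ b → (Γ.Adj a x ↔ Γ.Adj b x)) : swap a b ∈ graphAut Γ := by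
  intro x y
  simp only [swap_apply_def]
  split_ifs <;> subst_vars <;> grind [Γ.adj_comm, SimpleGraph.irrefl]

lemma not_squarefree_card_graphAut_of_swap_mem [Finite V] [DecidableEq V] {a b c d : V}
    (h : [a, b, c, d].Nodup) (hσ : swap a b ∈ graphAut Γ) (hτ : swap c d ∈ graphAut Γ) :
    ¬ Squarefree (Nat.card (graphAut Γ)) := by
  obtain ⟨⟨hab, hac, had⟩, -, hcd⟩ := by simpa using h
  have hσ2 : orderOf (⟨_, hσ⟩ : graphAut Γ) = 2 := by
    rw [orderOf_mk]; exact Perm.IsSwap.orderOf ⟨a, b, hab, rfl⟩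
  have hτ2 : orderOf (⟨_, hτ⟩ : graphAut Γ) = 2 := by
    rw [orderOf_mk]; exact Perm.IsSwap.orderOf ⟨c, d, hcd, rfl⟩
  have hne : (⟨_, hσ⟩ : graphAut Γ) ≠ ⟨_, hτ⟩ := fun he => by
    simpa [swap_apply_of_ne_of_ne hac had, Ne.symm hab] using
      congr_arg (fun σ : graphAut Γ => (σ : Perm V) a) he
  have hcomm := (Perm.disjoint_swap_swap h).commute
  have h4 := four_dvd_card_of_commute hσ2 hτ2 hne (Subtype.ext hcomm.eq)
  exact fun hsf => absurd (hsf.squarefree_of_dvd h4) (by decide +kernel)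

lemma graphAut_top : graphAut (⊤ : SimpleGraph V) = ⊤ :=
  eq_top_iff.mpr fun σ _ x y => by simp [σ.injective.ne_iff]

lemma apply_eq_of_mem_graphAut {σ : Perm V} (hσ : σ ∈ graphAut Γ) {v : V}
    (hv : ∀ u, (∀ w, w ≠ u → Γ.Adj u w) ↔ u = v) : σ v = v := by
  refine (hv (σ v)).mp fun w hw => ?_
  have hw' : σ⁻¹ w ≠ v := fun h => hw (by simp [← h])
  simpa using (hσ v (σ⁻¹ w)).mpr ((hv v).mpr rfl _ hw')

lemma card_graphAut_dvd_factorial_of_forall_apply_eq [Finite V] {v : V}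
    (h : ∀ σ ∈ graphAut Γ, σ v = v) : Nat.card (graphAut Γ) ∣ (Nat.card V - 1)! := by
  have hle : graphAut Γ ≤ MulAction.stabilizer (Perm V) v := h
  have hn : 0 < Nat.card V := Nat.card_pos_iff.mpr ⟨⟨v⟩, inferInstance⟩
  have hstab : Nat.card V * Nat.card (MulAction.stabilizer (Perm V) v) =
      Nat.card V * (Nat.card V - 1)! := by
    rw [Nat.mul_factorial_pred hn.ne', ← Nat.card_perm,
      ← card_mul_index (MulAction.stabilizer (Perm V) v),
      MulAction.index_stabilizer_of_transitive (Perm V) v, mul_comm]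
  exact (card_dvd_of_le hle).trans (Nat.eq_of_mul_eq_mul_left hn hstab).dvd

end graphAut

section enhancedPowerGraph

variable {G : Type*} [Group G]

lemma enhancedPowerGraph_eq_top [IsCyclic G] : enhancedPowerGraph G = ⊤ := by
  obtain ⟨g, hg⟩ := IsCyclic.exists_generator (α := G)
  ext x y
  exact ⟨fun h => h.1, fun h => ⟨h, g, hg x, hg y⟩⟩

lemma swap_mem_graphAut_of_zpowers_eq [DecidableEq G] {a b : G} (h : zpowers a = zpowers b) :
    swap a b ∈ graphAut (enhancedPowerGraph G) := by
  refine swap_mem_graphAut fun x hxa hxb => ?_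
  have key : ∀ z, a ∈ zpowers z ↔ b ∈ zpowers z := fun z => by
    rw [← zpowers_le, h, zpowers_le]
  simp only [enhancedPowerGraph, key, ne_eq, hxa.symm, hxb.symm, not_false_eq_true, true_and]

lemma enhancedPowerGraph_adj_iff_eq_one {s x : G} (hs : ∀ z, s ∈ zpowers z → z = s)
    (hx : x ≠ s) : (enhancedPowerGraph G).Adj s x ↔ x = 1 := by
  have hs2 : s ^ 2 = 1 := by
    rw [sq, mul_eq_one_iff_eq_inv, hs s⁻¹ (by rw [zpowers_inv]; exact mem_zpowers s)]
  constructor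
  · rintro ⟨-, z, hsz, hxz⟩
    obtain rfl := hs z hsz
    exact (eq_one_or_eq_of_mem_zpowers hs2 hxz).resolve_right hx
  · rintro rfl
    exact ⟨hx.symm, s, mem_zpowers s, one_mem _⟩

lemma swap_mem_graphAut_of_forall_mem_zpowers [DecidableEq G] {s t : G}
    (hs : ∀ z, s ∈ zpowers z → z = s) (ht : ∀ z, t ∈ zpowers z → z = t) :
    swap s t ∈ graphAut (enhancedPowerGraph G) :=
  swap_mem_graphAut fun _ hxs hxt => by
    rw [enhancedPowerGraph_adj_iff_eq_one hs hxs, enhancedPowerGraph_adj_iff_eq_one ht hxt]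

lemma squarefree_card_graphAut_iff_of_isCyclic [Finite G] [IsCyclic G] :
    Squarefree (Nat.card (graphAut (enhancedPowerGraph G))) ↔ Nat.card G ≤ 3 := by
  rw [enhancedPowerGraph_eq_top, graphAut_top, card_top, Nat.card_perm,
    Nat.squarefree_factorial_iff]

end enhancedPowerGraph

section squarefree

variable {G : Type*} [Group G] [Finite G]
  (hsf : Squarefree (Nat.card (graphAut (enhancedPowerGraph G))))
include hsf

lemma eq_or_eq_inv_of_sq_ne_one {g h : G} (hg : g ^ 2 ≠ 1) (hh : h ^ 2 ≠ 1) :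
    h = g ∨ h = g⁻¹ := by
  classical
  by_contra! hne
  refine not_squarefree_card_graphAut_of_swap_mem (a := g) (b := g⁻¹) (c := h) (d := h⁻¹) ?_
    (swap_mem_graphAut_of_zpowers_eq zpowers_inv.symm)
    (swap_mem_graphAut_of_zpowers_eq zpowers_inv.symm) hsf
  rw [sq, Ne, mul_eq_one_iff_eq_inv] at hg hh
  simp only [List.nodup_cons, List.mem_cons, List.not_mem_nil]
  grind [inv_inj, inv_eq_iff_eq_inv]

lemma sq_eq_one_of_notMem_zpowers {g x : G} (hg : g ^ 2 ≠ 1) (hx : x ∉ zpowers g) :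
    x ^ 2 = 1 := by
  by_contra hx2
  rcases eq_or_eq_inv_of_sq_ne_one hsf hg hx2 with rfl | rfl
  exacts [hx (mem_zpowers x), hx (inv_mem (mem_zpowers g))]

lemma eq_of_mem_zpowers_of_notMem_zpowers {g x z : G} (hg : g ^ 2 ≠ 1) (hx : x ∉ zpowers g)
    (hxz : x ∈ zpowers z) : z = x := by
  by_cases hz : z ^ 2 = 1
  · exact eq_of_mem_zpowers_of_sq_eq_one hz (ne_of_mem_of_not_mem (one_mem _) hx).symm hxz
  · rcases eq_or_eq_inv_of_sq_ne_one hsf hg hz with rfl | rfl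
    exacts [absurd hxz hx, absurd (zpowers_inv (g := g) ▸ hxz) hx]

lemma mem_zpowers_of_sq_ne_one {g : G} (hg : g ^ 2 ≠ 1) (t : G) : t ∈ zpowers g := by
  classical
  by_contra ht
  set u := g * t * g⁻¹
  have hu : u ∉ zpowers g := by
    rwa [mul_mem_cancel_right (inv_mem (mem_zpowers g)), mul_mem_cancel_left (mem_zpowers g)]
  have htu : t ≠ u := fun htu => by
    have hcomm : Commute g t := (eq_mul_inv_iff_mul_eq.mp htu).symm
    have hgt : g * t ∉ zpowers g := by rwa [mul_mem_cancel_left (mem_zpowers g)]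
    refine hg ?_
    calc g ^ 2 = g ^ 2 * t ^ 2 := by rw [sq_eq_one_of_notMem_zpowers hsf hg ht, mul_one]
      _ = (g * t) ^ 2 := (hcomm.mul_pow 2).symm
      _ = 1 := sq_eq_one_of_notMem_zpowers hsf hg hgt
  refine not_squarefree_card_graphAut_of_swap_mem (a := g) (b := g⁻¹) (c := t) (d := u) ?_
    (swap_mem_graphAut_of_zpowers_eq zpowers_inv.symm)
    (swap_mem_graphAut_of_forall_mem_zpowers
      (fun _ => eq_of_mem_zpowers_of_notMem_zpowers hsf hg ht)
      (fun _ => eq_of_mem_zpowers_of_notMem_zpowers hsf hg hu)) hsf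
  have hne : ∀ x ∈ zpowers g, x ≠ t ∧ x ≠ u := fun x hx =>
    ⟨ne_of_mem_of_not_mem hx ht, ne_of_mem_of_not_mem hx hu⟩
  have := hne g (mem_zpowers g)
  have := hne g⁻¹ (inv_mem (mem_zpowers g))
  rw [sq, Ne, mul_eq_one_iff_eq_inv] at hg
  simp only [List.nodup_cons, List.mem_cons, List.not_mem_nil]
  grind

lemma card_le_four_of_forall_sq_eq_one (hG : ∀ x : G, x ^ 2 = 1) : Nat.card G ≤ 4 := by
  classical
  have := Fintype.ofFinite G
  have generated_only_by_self : ∀ s : G, s ≠ 1 → ∀ z, s ∈ zpowers z → z = s :=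
    fun _ hs z => eq_of_mem_zpowers_of_sq_eq_one (hG z) hs
  by_contra! h
  obtain ⟨f⟩ : Nonempty (Fin 4 ↪ {x : G // x ≠ 1}) := by
    apply Function.Embedding.nonempty_of_card_le
    rw [Fintype.card_fin, Fintype.card_subtype_compl, Fintype.card_subtype_eq]
    rw [Nat.card_eq_fintype_card] at h
    omega
  let e : Fin 4 → G := fun i => f i
  have he : ∀ i, e i ≠ 1 := fun i => (f i).2
  exact not_squarefree_card_graphAut_of_swap_mem
    (by simpa [List.ofFn_succ] using List.nodup_ofFn.mpr (Subtype.val_injective.comp f.injective))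
    (swap_mem_graphAut_of_forall_mem_zpowers (generated_only_by_self _ (he 0))
      (generated_only_by_self _ (he 1)))
    (swap_mem_graphAut_of_forall_mem_zpowers (generated_only_by_self _ (he 2))
      (generated_only_by_self _ (he 3))) hsf

lemma isKleinFour_of_squarefree_card_graphAut (hG : ¬ IsCyclic G) : IsKleinFour G := by
  have hsq : ∀ x : G, x ^ 2 = 1 := fun x => by
    by_contra hx
    exact hG ⟨⟨x, mem_zpowers_of_sq_ne_one hsf hx⟩⟩
  have hcard : Nat.card G = 4 := by
    have h1 : Nat.card G ≠ 1 := fun h => by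
      have := (Nat.card_eq_one_iff_unique.mp h).1
      exact hG inferInstance
    have h2 : Nat.card G ≠ 2 := fun h => hG (isCyclic_of_prime_card h)
    have h3 : Nat.card G ≠ 3 := fun h => hG (isCyclic_of_prime_card h)
    have := card_le_four_of_forall_sq_eq_one hsf hsq
    have := Nat.card_pos (α := G)
    omega
  exact ⟨hcard, (not_isCyclic_iff_exponent_eq_prime Nat.prime_two (by rw [hcard]; rfl)).mp hG⟩

end squarefree

section isKleinFour

variable {G : Type*} [Group G] [IsKleinFour G]

lemma forall_enhancedPowerGraph_adj_iff_eq_one (u : G) :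
    (∀ w, w ≠ u → (enhancedPowerGraph G).Adj u w) ↔ u = 1 := by
  refine ⟨fun hu => ?_, fun hu w hw => ?_⟩
  · by_contra hu1
    have hgen : ∀ z, u ∈ zpowers z → z = u := fun z =>
      eq_of_mem_zpowers_of_sq_eq_one (by rw [sq, IsKleinFour.mul_self]) hu1
    have hsurj : Function.Surjective fun b : Bool => bif b then u else 1 := fun w => by
      by_cases hw : w = u
      · exact ⟨true, hw.symm⟩
      · exact ⟨false, ((enhancedPowerGraph_adj_iff_eq_one hgen hw).mp (hu w hw)).symm⟩
    have := Nat.card_le_card_of_surjective _ hsurj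
    simp [IsKleinFour.card_four] at this
  · subst hu
    exact ⟨hw.symm, w, one_mem _, mem_zpowers w⟩

lemma squarefree_card_graphAut_of_isKleinFour :
    Squarefree (Nat.card (graphAut (enhancedPowerGraph G))) := by
  have := IsKleinFour.instFinite (G := G)
  have hfix : ∀ σ ∈ graphAut (enhancedPowerGraph G), σ 1 = 1 := fun _ hσ =>
    apply_eq_of_mem_graphAut hσ forall_enhancedPowerGraph_adj_iff_eq_one
  refine (Nat.squarefree_factorial_iff.mpr ?_).squarefree_of_dvd
    (card_graphAut_dvd_factorial_of_forall_apply_eq hfix)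
  simp [IsKleinFour.card_four]

end isKleinFour

section isomorphismClasses

variable {G : Type*} [Group G]

lemma nonempty_mulEquiv_multiplicative_zmod_iff {p : ℕ} [Fact p.Prime] :
    Nonempty (G ≃* Multiplicative (ZMod p)) ↔ Nat.card G = p := by
  refine ⟨fun ⟨e⟩ => by simp [Nat.card_congr e.toEquiv], fun h => ?_⟩
  subst h
  exact ⟨(zmodCyclicMulEquiv (isCyclic_of_prime_card rfl)).symm⟩

lemma nonempty_mulEquiv_multiplicative_zmod_two_prod_iff :
    Nonempty (G ≃* Multiplicative (ZMod 2 × ZMod 2)) ↔ IsKleinFour G :=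
  ⟨fun ⟨e⟩ => ⟨by simp [Nat.card_congr e.toEquiv],
      by rw [Monoid.exponent_eq_of_mulEquiv e, IsKleinFour.exponent_two]⟩,
    fun _ => IsKleinFour.nonempty_mulEquiv⟩

end isomorphismClasses

theorem stmt_16 {G : Type*} [Group G] [Fintype G] [Nontrivial G] :
    Squarefree (Nat.card ↥(graphAut (enhancedPowerGraph G))) ↔
      (Nonempty (G ≃* Multiplicative (ZMod 2)) ∨
       Nonempty (G ≃* Multiplicative (ZMod 3)) ∨
       Nonempty (G ≃* Multiplicative (ZMod 2 × ZMod 2))) := by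
  rw [nonempty_mulEquiv_multiplicative_zmod_iff, nonempty_mulEquiv_multiplicative_zmod_iff,
    nonempty_mulEquiv_multiplicative_zmod_two_prod_iff]
  by_cases hG : IsCyclic G
  · have hV : ¬ IsKleinFour G := fun _ => IsKleinFour.not_isCyclic hG
    have := Finite.one_lt_card (α := G)
    rw [squarefree_card_graphAut_iff_of_isCyclic]
    simp only [hV, or_false]
    omega
  · have h2 : Nat.card G ≠ 2 := fun h => hG (isCyclic_of_prime_card h)
    have h3 : Nat.card G ≠ 3 := fun h => hG (isCyclic_of_prime_card h)
    simp only [h2, h3, false_or]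
    exact ⟨fun hsf => isKleinFour_of_squarefree_card_graphAut hsf hG,
      fun _ => squarefree_card_graphAut_of_isKleinFour⟩
end
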